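/- The poset ℙ of conditions used to build a suitable 2-graph is σ-closed: every decreasing ω-sequence of conditions has a lower bound. -/
import Mathlib


open Set

universe u

/-- `η` respects the 2-graph given by `R` on the set `D`. -/
def RespectsOn {Ω : Type u} (R : Fin 2 → Ω → Ω → Prop) (D : Set Ω) (η : Ω → Fin 2) : Prop :=
  ∀ e : Fin 2, ∀ a ∈ D, ∀ b ∈ D, R e a b → ¬(η a = e ∧ η b = e)

/-- `z` realizes the finite positive atomic type with domain `t` and labels `s`. -/
def Realizes {Ω : Type u} (R : Fin 2 → Ω → Ω → Prop) (t : Finset Ω) (s : Ω → Fin 2)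
    (z : Ω) : Prop :=
  ∀ x ∈ t, R (s x) x z

/-- `D ≼⁻ B`. -/
def PrecMinus {Ω : Type u} (R : Fin 2 → Ω → Ω → Prop) (D : Set Ω) : Prop :=
  ∀ (t : Finset Ω) (s : Ω → Fin 2), 2 ≤ t.card → ↑t ⊆ D →
    (∃ z, Realizes R t s z) → ∃ z ∈ D, Realizes R t s z

/-- A condition `p = ⟨Bᵖ, R₀ᵖ, R₁ᵖ, W₀ᵖ, W₁ᵖ, Lᵖ, Aᵖ⟩` of the poset `ℙ` used to build a
suitable 2-graph on a set `Ω` (of size `ℵ₁`).  The families `Lᵖ` (respecting colorings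
`ηᵖ_{a,e}` with `ηᵖ_{a,e}(a) = e`) and `Aᵖ` (partial automorphisms `fᵖ_{a,b}` with domains
`Dᵖ_{a,b} ≼⁻ Bᵖ`) are encoded by total functions `eta` and `f`, `Dom`, meaningful on `B`. -/
structure SGCond (Ω : Type u) where
  B : Set Ω
  R : Fin 2 → Ω → Ω → Prop
  W : Fin 2 → Set Ω
  eta : Ω → Fin 2 → Ω → Fin 2
  C : Set (Ω × Ω)
  Dom : Ω × Ω → Set Ω
  f : Ω × Ω → Ω → Ω
  countable : B.Countable
  edge_mem : ∀ (e : Fin 2) (a b : Ω), R e a b → a ∈ B ∧ b ∈ B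
  irrefl : ∀ e, Irreflexive (R e)
  symm : ∀ e, Symmetric (R e)
  disj : ∀ a b, ¬(R 0 a b ∧ R 1 a b)
  W_sub : ∀ e, W e ⊆ B
  W_inf : ∀ e, (W e).Infinite
  W_complete : ∀ e, ∀ a ∈ W e, ∀ b ∈ W e, a ≠ b → R e a b
  W_disj : W 0 ∩ W 1 = ∅
  eta_respects : ∀ a ∈ B, ∀ e : Fin 2, RespectsOn R B (eta a e)
  eta_val : ∀ a ∈ B, ∀ e : Fin 2, eta a e a = e
  C_sub : C ⊆ B ×ˢ B
  dom_sub : ∀ ab ∈ C, Dom ab ⊆ B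
  f_bij : ∀ ab ∈ C, Set.BijOn (f ab) (Dom ab) (Dom ab)
  f_mem : ∀ ab ∈ C, ab.1 ∈ Dom ab ∧ ab.2 ∈ Dom ab
  f_val : ∀ ab ∈ C, f ab ab.1 = ab.2
  f_auto : ∀ ab ∈ C, ∀ e : Fin 2, ∀ x ∈ Dom ab, ∀ y ∈ Dom ab,
    (R e x y ↔ R e (f ab x) (f ab y))
  dom_prec : ∀ ab ∈ C, PrecMinus R (Dom ab)

/-- The order on `ℙ`: `q ≤ p` iff `𝐁ᵖ` is an (induced) 2-subgraph of `𝐁^q` with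
`Bᵖ ≼⁻ B^q`, and all other components of `q` extend those of `p` coherently. -/
def SGle {Ω : Type u} (q p : SGCond Ω) : Prop :=
  p.B ⊆ q.B ∧
  (∀ (e : Fin 2) (a b : Ω), a ∈ p.B → b ∈ p.B → (p.R e a b ↔ q.R e a b)) ∧
  PrecMinus q.R p.B ∧
  p.C ⊆ q.C ∧
  (∀ e : Fin 2, q.W e ∩ p.B = p.W e) ∧
  (∀ a ∈ p.B, ∀ e : Fin 2, ∀ x ∈ p.B, q.eta a e x = p.eta a e x) ∧
  (∀ ab ∈ p.C, p.Dom ab ⊆ q.Dom ab ∧ ∀ x ∈ p.Dom ab, q.f ab x = p.f ab x)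

section Aux

variable {Ω : Type u}

/-- The union relation. -/
def qR (p : ℕ → SGCond Ω) (e : Fin 2) (a b : Ω) : Prop := ∃ n, (p n).R e a b

open Classical in
noncomputable def qEta (p : ℕ → SGCond Ω) (a : Ω) (e : Fin 2) (x : Ω) : Fin 2 :=
  if h : ∃ n, a ∈ (p n).B ∧ x ∈ (p n).B then (p h.choose).eta a e x else 0

/-- The union domain. -/
def qDom (p : ℕ → SGCond Ω) (ab : Ω × Ω) : Set Ω :=
  {x | ∃ n, ab ∈ (p n).C ∧ x ∈ (p n).Dom ab}

open Classical in
noncomputable def qf (p : ℕ → SGCond Ω) (ab : Ω × Ω) (x : Ω) : Ω :=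
  if h : ∃ n, ab ∈ (p n).C ∧ x ∈ (p n).Dom ab then (p h.choose).f ab x else x

variable {p : ℕ → SGCond Ω} (hdec : ∀ m n : ℕ, m ≤ n → SGle (p n) (p m))
include hdec

lemma Bmono {m n : ℕ} (h : m ≤ n) : (p m).B ⊆ (p n).B := (hdec m n h).1

lemma Riff {m n : ℕ} (h : m ≤ n) {e : Fin 2} {a b : Ω}
    (ha : a ∈ (p m).B) (hb : b ∈ (p m).B) : (p m).R e a b ↔ (p n).R e a b :=
  (hdec m n h).2.1 e a b ha hb

lemma Cmono {m n : ℕ} (h : m ≤ n) : (p m).C ⊆ (p n).C := (hdec m n h).2.2.2.1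

lemma Wmono {m n : ℕ} (h : m ≤ n) (e : Fin 2) : (p m).W e ⊆ (p n).W e := by
  intro x hx
  have := (hdec m n h).2.2.2.2.1 e
  rw [← this] at hx
  exact hx.1

lemma etacoh {m n : ℕ} (h : m ≤ n) {a x : Ω} (e : Fin 2)
    (ha : a ∈ (p m).B) (hx : x ∈ (p m).B) : (p n).eta a e x = (p m).eta a e x :=
  (hdec m n h).2.2.2.2.2.1 a ha e x hx

lemma Dommono {m n : ℕ} (h : m ≤ n) {ab : Ω × Ω} (hab : ab ∈ (p m).C) :
    (p m).Dom ab ⊆ (p n).Dom ab := ((hdec m n h).2.2.2.2.2.2 ab hab).1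

lemma fcoh {m n : ℕ} (h : m ≤ n) {ab : Ω × Ω} (hab : ab ∈ (p m).C) {x : Ω}
    (hx : x ∈ (p m).Dom ab) : (p n).f ab x = (p m).f ab x :=
  ((hdec m n h).2.2.2.2.2.2 ab hab).2 x hx

lemma qR_iff {n : ℕ} {e : Fin 2} {a b : Ω} (ha : a ∈ (p n).B) (hb : b ∈ (p n).B) :
    qR p e a b ↔ (p n).R e a b := by
  constructor
  · rintro ⟨m, hm⟩
    have hma := ((p m).edge_mem e a b hm).1
    have hmb := ((p m).edge_mem e a b hm).2
    have h1 : (p (max m n)).R e a b :=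
      (Riff hdec (le_max_left m n) hma hmb).mp hm
    exact (Riff hdec (le_max_right m n) ha hb).mpr h1
  · exact fun h => ⟨n, h⟩

lemma qEta_eq {n : ℕ} {a x : Ω} (e : Fin 2) (ha : a ∈ (p n).B) (hx : x ∈ (p n).B) :
    qEta p a e x = (p n).eta a e x := by
  have h : ∃ k, a ∈ (p k).B ∧ x ∈ (p k).B := ⟨n, ha, hx⟩
  rw [qEta, dif_pos h]
  obtain ⟨hm1, hm2⟩ := h.choose_spec
  calc (p h.choose).eta a e x
      = (p (max h.choose n)).eta a e x := (etacoh hdec (le_max_left _ _) e hm1 hm2).symm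
    _ = (p n).eta a e x := etacoh hdec (le_max_right _ _) e ha hx

lemma qf_eq {n : ℕ} {ab : Ω × Ω} {x : Ω} (hab : ab ∈ (p n).C) (hx : x ∈ (p n).Dom ab) :
    qf p ab x = (p n).f ab x := by
  have h : ∃ k, ab ∈ (p k).C ∧ x ∈ (p k).Dom ab := ⟨n, hab, hx⟩
  rw [qf, dif_pos h]
  obtain ⟨hm1, hm2⟩ := h.choose_spec
  calc (p h.choose).f ab x
      = (p (max h.choose n)).f ab x := (fcoh hdec (le_max_left _ _) hm1 hm2).symm
    _ = (p n).f ab x := fcoh hdec (le_max_right _ _) hab hx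

lemma Realizes_iff {n : ℕ} {t : Finset Ω} {s : Ω → Fin 2} {z : Ω}
    (ht : ↑t ⊆ (p n).B) (hz : z ∈ (p n).B) :
    Realizes (qR p) t s z ↔ Realizes (p n).R t s z := by
  constructor <;> intro h x hx
  · exact (qR_iff hdec (ht hx) hz).mp (h x hx)
  · exact (qR_iff hdec (ht hx) hz).mpr (h x hx)

end Aux

/-- The poset `ℙ` of conditions used to build a suitable 2-graph is σ-closed:
every decreasing ω-sequence of conditions has a lower bound. -/


theorem SG_sigma_closed (Ω : Type u) (hΩ : Cardinal.mk Ω = Cardinal.aleph 1)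
    (p : ℕ → SGCond Ω) (hdec : ∀ m n : ℕ, m ≤ n → SGle (p n) (p m)) :
    ∃ q : SGCond Ω, ∀ n, SGle q (p n) := by
  classical
  -- helper: PrecMinus for the union relation over sets reflected at each level
  have prec_aux : ∀ (n : ℕ) (t : Finset Ω) (s : Ω → Fin 2), 2 ≤ t.card →
      ↑t ⊆ (p n).B → (∃ z, Realizes (qR p) t s z) →
      ∃ k, n ≤ k ∧ ∃ z, Realizes (p k).R t s z := by
    intro n t s hcard ht ⟨z, hz⟩
    obtain ⟨x0, hx0⟩ := Finset.card_pos.mp (by omega : 0 < t.card)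
    obtain ⟨m, hm⟩ := hz x0 hx0
    have hzB : z ∈ (p m).B := ((p m).edge_mem _ _ _ hm).2
    refine ⟨max n m, le_max_left _ _, z, ?_⟩
    have ht' : ↑t ⊆ (p (max n m)).B := ht.trans (Bmono hdec (le_max_left _ _))
    have hz' : z ∈ (p (max n m)).B := Bmono hdec (le_max_right n m) hzB
    exact (Realizes_iff hdec ht' hz').mp hz
  refine ⟨{
    B := ⋃ n, (p n).B
    R := qR p
    W := fun e => ⋃ n, (p n).W e
    eta := qEta p
    C := ⋃ n, (p n).C
    Dom := qDom p
    f := qf p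
    countable := Set.countable_iUnion fun n => (p n).countable
    edge_mem := fun e a b ⟨n, h⟩ =>
      ⟨mem_iUnion.2 ⟨n, ((p n).edge_mem e a b h).1⟩,
       mem_iUnion.2 ⟨n, ((p n).edge_mem e a b h).2⟩⟩
    irrefl := fun e a ⟨n, h⟩ => (p n).irrefl e a h
    symm := fun e a b ⟨n, h⟩ => ⟨n, (p n).symm e h⟩
    disj := ?_
    W_sub := ?_
    W_inf := fun e => ((p 0).W_inf e).mono (subset_iUnion (fun n => (p n).W e) 0)
    W_complete := ?_
    W_disj := ?_
    eta_respects := ?_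
    eta_val := ?_
    C_sub := ?_
    dom_sub := ?_
    f_bij := ?_
    f_mem := ?_
    f_val := ?_
    f_auto := ?_
    dom_prec := ?_ }, ?_⟩
  · -- disj
    rintro a b ⟨⟨m, h0⟩, ⟨n, h1⟩⟩
    have ha : a ∈ (p m).B := ((p m).edge_mem _ _ _ h0).1
    have hb : b ∈ (p m).B := ((p m).edge_mem _ _ _ h0).2
    have ha' : a ∈ (p n).B := ((p n).edge_mem _ _ _ h1).1
    have hb' : b ∈ (p n).B := ((p n).edge_mem _ _ _ h1).2
    exact (p (max m n)).disj a b
      ⟨(Riff hdec (le_max_left m n) ha hb).mp h0,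
       (Riff hdec (le_max_right m n) ha' hb').mp h1⟩
  · -- W_sub
    intro e
    exact iUnion_subset fun n => ((p n).W_sub e).trans (subset_iUnion (fun k => (p k).B) n)
  · -- W_complete
    intro e a ha b hb hab
    obtain ⟨m, hm⟩ := mem_iUnion.mp ha
    obtain ⟨n, hn⟩ := mem_iUnion.mp hb
    refine ⟨max m n, (p (max m n)).W_complete e a ?_ b ?_ hab⟩
    · exact Wmono hdec (le_max_left m n) e hm
    · exact Wmono hdec (le_max_right m n) e hn
  · -- W_disj
    rw [Set.eq_empty_iff_forall_notMem]
    rintro x ⟨hx0, hx1⟩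
    obtain ⟨m, hm⟩ := mem_iUnion.mp hx0
    obtain ⟨n, hn⟩ := mem_iUnion.mp hx1
    have : x ∈ (p (max m n)).W 0 ∩ (p (max m n)).W 1 :=
      ⟨Wmono hdec (le_max_left m n) 0 hm, Wmono hdec (le_max_right m n) 1 hn⟩
    rw [(p (max m n)).W_disj] at this
    exact this
  · -- eta_respects
    intro a ha e e' x hx y hy hR ⟨h1, h2⟩
    obtain ⟨na, hna⟩ := mem_iUnion.mp ha
    obtain ⟨nx, hnx⟩ := mem_iUnion.mp hx
    obtain ⟨ny, hny⟩ := mem_iUnion.mp hy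
    set n := max (max na nx) ny with hn
    have haB : a ∈ (p n).B := Bmono hdec ((le_max_left na nx).trans (le_max_left _ _)) hna
    have hxB : x ∈ (p n).B := Bmono hdec ((le_max_right na nx).trans (le_max_left _ _)) hnx
    have hyB : y ∈ (p n).B := Bmono hdec (le_max_right _ _) hny
    rw [qEta_eq hdec e haB hxB] at h1
    rw [qEta_eq hdec e haB hyB] at h2
    exact (p n).eta_respects a haB e e' x hxB y hyB ((qR_iff hdec hxB hyB).mp hR) ⟨h1, h2⟩
  · -- eta_val
    intro a ha e
    obtain ⟨n, hn⟩ := mem_iUnion.mp ha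
    rw [qEta_eq hdec e hn hn]
    exact (p n).eta_val a hn e
  · -- C_sub
    intro ab hab
    obtain ⟨n, hn⟩ := mem_iUnion.mp hab
    obtain ⟨h1, h2⟩ := (p n).C_sub hn
    exact ⟨mem_iUnion.2 ⟨n, h1⟩, mem_iUnion.2 ⟨n, h2⟩⟩
  · -- dom_sub
    rintro ab _ x ⟨n, hab, hx⟩
    exact mem_iUnion.2 ⟨n, (p n).dom_sub ab hab hx⟩
  · -- f_bij
    intro ab _
    refine ⟨?_, ?_, ?_⟩
    · rintro x ⟨n, hab, hx⟩
      rw [qf_eq hdec hab hx]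
      exact ⟨n, hab, ((p n).f_bij ab hab).mapsTo hx⟩
    · rintro x ⟨m, habm, hxm⟩ y ⟨n, habn, hyn⟩ hxy
      have habk : ab ∈ (p (max m n)).C := Cmono hdec (le_max_left m n) habm
      have hxk : x ∈ (p (max m n)).Dom ab := Dommono hdec (le_max_left m n) habm hxm
      have hyk : y ∈ (p (max m n)).Dom ab := Dommono hdec (le_max_right m n) habn hyn
      rw [qf_eq hdec habk hxk, qf_eq hdec habk hyk] at hxy
      exact ((p (max m n)).f_bij ab habk).injOn hxk hyk hxy
    · rintro y ⟨n, hab, hy⟩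
      obtain ⟨x, hx, hxy⟩ := ((p n).f_bij ab hab).surjOn hy
      exact ⟨x, ⟨n, hab, hx⟩, by rw [qf_eq hdec hab hx]; exact hxy⟩
  · -- f_mem
    intro ab hab
    obtain ⟨n, hn⟩ := mem_iUnion.mp hab
    obtain ⟨h1, h2⟩ := (p n).f_mem ab hn
    exact ⟨⟨n, hn, h1⟩, ⟨n, hn, h2⟩⟩
  · -- f_val
    intro ab hab
    obtain ⟨n, hn⟩ := mem_iUnion.mp hab
    rw [qf_eq hdec hn ((p n).f_mem ab hn).1]
    exact (p n).f_val ab hn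
  · -- f_auto
    rintro ab _ e x ⟨m, habm, hxm⟩ y ⟨n, habn, hyn⟩
    set k := max m n with hk
    have habk : ab ∈ (p k).C := Cmono hdec (le_max_left m n) habm
    have hxk : x ∈ (p k).Dom ab := Dommono hdec (le_max_left m n) habm hxm
    have hyk : y ∈ (p k).Dom ab := Dommono hdec (le_max_right m n) habn hyn
    have hfx : (p k).f ab x ∈ (p k).Dom ab := ((p k).f_bij ab habk).mapsTo hxk
    have hfy : (p k).f ab y ∈ (p k).Dom ab := ((p k).f_bij ab habk).mapsTo hyk
    rw [qf_eq hdec habk hxk, qf_eq hdec habk hyk]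
    have hsub := (p k).dom_sub ab habk
    rw [qR_iff hdec (hsub hxk) (hsub hyk), qR_iff hdec (hsub hfx) (hsub hfy)]
    exact (p k).f_auto ab habk e x hxk y hyk
  · -- dom_prec
    rintro ab _ t s hcard ht hz
    have hmem : ∀ x ∈ t, ∃ n, ab ∈ (p n).C ∧ x ∈ (p n).Dom ab := fun x hx => ht hx
    choose! g hg1 hg2 using hmem
    obtain ⟨x0, hx0⟩ := Finset.card_pos.mp (by omega : 0 < t.card)
    set N := t.sup g with hN
    have habN : ab ∈ (p N).C := Cmono hdec (Finset.le_sup hx0) (hg1 x0 hx0)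
    have htN : ↑t ⊆ (p N).Dom ab := by
      intro x hx
      exact Dommono hdec (Finset.le_sup hx) (hg1 x hx) (hg2 x hx)
    obtain ⟨k, hNk, z, hzk⟩ := prec_aux N t s hcard (htN.trans ((p N).dom_sub ab habN)) hz
    have habk : ab ∈ (p k).C := Cmono hdec hNk habN
    have htk : ↑t ⊆ (p k).Dom ab := htN.trans (Dommono hdec hNk habN)
    obtain ⟨z', hz'D, hz'⟩ := (p k).dom_prec ab habk t s hcard htk ⟨z, hzk⟩
    exact ⟨z', ⟨k, habk, hz'D⟩, fun x hx => ⟨k, hz' x hx⟩⟩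
  · -- SGle
    intro n
    refine ⟨subset_iUnion (fun k => (p k).B) n, ?_, ?_, ?_, ?_, ?_, ?_⟩
    · intro e a b ha hb
      exact (qR_iff hdec ha hb).symm
    · -- PrecMinus (qR p) (p n).B
      intro t s hcard ht hz
      obtain ⟨k, hnk, z, hzk⟩ := prec_aux n t s hcard ht hz
      obtain ⟨z', hz'B, hz'⟩ := (hdec n k hnk).2.2.1 t s hcard ht ⟨z, hzk⟩
      exact ⟨z', hz'B, fun x hx => ⟨k, hz' x hx⟩⟩
    · exact subset_iUnion (fun k => (p k).C) n
    · intro e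
      ext x
      constructor
      · rintro ⟨hx, hxB⟩
        obtain ⟨m, hm⟩ := mem_iUnion.mp hx
        rcases le_total m n with h | h
        · exact Wmono hdec h e hm
        · have := (hdec n m h).2.2.2.2.1 e
          rw [← this]
          exact ⟨hm, hxB⟩
      · intro hx
        exact ⟨mem_iUnion.2 ⟨n, hx⟩, (p n).W_sub e hx⟩
    · intro a ha e x hx
      exact qEta_eq hdec e ha hx
    · intro ab hab
      exact ⟨fun x hx => ⟨n, hab, hx⟩, fun x hx => qf_eq hdec hab hx⟩
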